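/- arXiv:2007.00391 — 3 statements merged into one kernel-verified Lean document; each statement's English description precedes it below -/
import Mathlib

section
/- Let A be a nonempty finite set, let τ > 0, let μ > 0, and let Ω : (A → ℝ) → ℝ be μ-strongly convex on the probability simplex Δ(A) with respect to the Euclidean norm. For Q₁, Q₂ : A → ℝ, let π₁, π₂ ∈ Δ(A) be maximizers of π ↦ Σ_{a∈A} π(a)·Qᵢ(a) − τ·Ω(π) over Δ(A) (i = 1, 2). Then ‖π₁ − π₂‖₂ ≤ (1/(τμ))·‖Q₁ − Q₂‖₂, i.e., the maximizing-argument map is Lipschitz continuous. -/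
/-- The probability simplex over a finite type `A`. -/
def probSimplex (A : Type*) [Fintype A] : Set (A → ℝ) :=
  {p | (∀ a, 0 ≤ p a) ∧ ∑ a, p a = 1}

lemma aux_key {A : Type*} [Fintype A] (τ μ : ℝ) (hτ : 0 < τ) (hμ : 0 < μ)
    (Ω : (A → ℝ) → ℝ)
    (hsc : ∀ p ∈ probSimplex A, ∀ q ∈ probSimplex A, ∀ t ∈ Set.Icc (0:ℝ) 1,
      Ω (fun a => t * p a + (1 - t) * q a) ≤
        t * Ω p + (1 - t) * Ω q - μ / 2 * t * (1 - t) * ∑ a, (p a - q a) ^ 2)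
    (Q : A → ℝ) (p q : A → ℝ) (hp : p ∈ probSimplex A) (hq : q ∈ probSimplex A)
    (hmax : ∀ r ∈ probSimplex A, ∑ a, r a * Q a - τ * Ω r ≤ ∑ a, p a * Q a - τ * Ω p) :
    τ * μ / 2 * ∑ a, (p a - q a) ^ 2 ≤
      (∑ a, p a * Q a - τ * Ω p) - (∑ a, q a * Q a - τ * Ω q) := by
  set S := ∑ a, (p a - q a) ^ 2 with hS
  have hS0 : 0 ≤ S := Finset.sum_nonneg fun a _ => sq_nonneg _
  -- for each t ∈ (0,1]:
  have key : ∀ t : ℝ, 0 < t → t ≤ 1 →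
      (∑ a, q a * Q a - τ * Ω q) ≤ (∑ a, p a * Q a - τ * Ω p) - τ * μ / 2 * (1 - t) * S := by
    intro t ht0 ht1
    set r : A → ℝ := fun a => t * q a + (1 - t) * p a with hr
    have hrS : r ∈ probSimplex A := by
      constructor
      · intro a
        exact add_nonneg (mul_nonneg ht0.le (hq.1 a)) (mul_nonneg (by linarith) (hp.1 a))
      · simp only [hr, Finset.sum_add_distrib, ← Finset.mul_sum, hp.2, hq.2]
        ring
    have hΩ := hsc q hq p hp t ⟨le_of_lt ht0, ht1⟩
    have hSsymm : ∑ a, (q a - p a) ^ 2 = S := by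
      apply Finset.sum_congr rfl; intro a _; ring
    rw [hSsymm] at hΩ
    have hlin : ∑ a, r a * Q a = t * ∑ a, q a * Q a + (1 - t) * ∑ a, p a * Q a := by
      simp only [hr]
      rw [Finset.mul_sum, Finset.mul_sum, ← Finset.sum_add_distrib]
      exact Finset.sum_congr rfl fun a _ => by ring
    have hm := hmax r hrS
    rw [hlin] at hm
    have : t * ((∑ a, q a * Q a - τ * Ω q) - ((∑ a, p a * Q a - τ * Ω p) - τ * μ / 2 * (1 - t) * S)) ≤ 0 := by
      nlinarith [hm, hΩ]
    nlinarith [this]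
  -- take t → 0
  have h2 : (∑ a, q a * Q a - τ * Ω q) ≤ (∑ a, p a * Q a - τ * Ω p) - τ * μ / 2 * S := by
    apply le_of_forall_pos_le_add
    intro ε hε
    rcases le_or_gt S 0 with h | h
    · have hS0' : S = 0 := le_antisymm h hS0
      have := key 1 one_pos le_rfl
      rw [hS0'] at this ⊢
      linarith
    · set c := τ * μ / 2 * S with hc
      have hc0 : 0 < c := by positivity
      set t := min 1 (ε / c) with htdef
      have ht0 : 0 < t := lt_min one_pos (by positivity)
      have ht1 : t ≤ 1 := min_le_left _ _
      have := key t ht0 ht1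
      have htc : c * t ≤ ε := by
        calc c * t ≤ c * (ε / c) := by
              apply mul_le_mul_of_nonneg_left (min_le_right _ _) hc0.le
          _ = ε := by field_simp
      nlinarith [this]
  linarith

theorem stmt_3 {A : Type*} [Fintype A] [Nonempty A] (τ μ : ℝ) (hτ : 0 < τ) (hμ : 0 < μ)
    (Ω : (A → ℝ) → ℝ)
    (hsc : ∀ p ∈ probSimplex A, ∀ q ∈ probSimplex A, ∀ t ∈ Set.Icc (0:ℝ) 1,
      Ω (fun a => t * p a + (1 - t) * q a) ≤
        t * Ω p + (1 - t) * Ω q - μ / 2 * t * (1 - t) * ∑ a, (p a - q a) ^ 2)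
    (Q₁ Q₂ : A → ℝ) (p₁ p₂ : A → ℝ)
    (hp₁ : p₁ ∈ probSimplex A)
    (hmax₁ : ∀ q ∈ probSimplex A, ∑ a, q a * Q₁ a - τ * Ω q ≤ ∑ a, p₁ a * Q₁ a - τ * Ω p₁)
    (hp₂ : p₂ ∈ probSimplex A)
    (hmax₂ : ∀ q ∈ probSimplex A, ∑ a, q a * Q₂ a - τ * Ω q ≤ ∑ a, p₂ a * Q₂ a - τ * Ω p₂) :
    Real.sqrt (∑ a, (p₁ a - p₂ a) ^ 2) ≤
      (1 / (τ * μ)) * Real.sqrt (∑ a, (Q₁ a - Q₂ a) ^ 2) := by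

  set S := ∑ a, (p₁ a - p₂ a) ^ 2 with hS
  set T := ∑ a, (Q₁ a - Q₂ a) ^ 2 with hT
  have hS0 : 0 ≤ S := Finset.sum_nonneg fun a _ => sq_nonneg _
  have H1 := aux_key τ μ hτ hμ Ω hsc Q₁ p₁ p₂ hp₁ hp₂ hmax₁
  have H2 := aux_key τ μ hτ hμ Ω hsc Q₂ p₂ p₁ hp₂ hp₁ hmax₂
  have hsymm : ∑ a, (p₂ a - p₁ a) ^ 2 = S := by
    apply Finset.sum_congr rfl; intro a _; ring
  rw [hsymm] at H2
  have hsum : τ * μ * S ≤ ∑ a, (p₁ a - p₂ a) * (Q₁ a - Q₂ a) := by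
    have he : ∑ a, (p₁ a - p₂ a) * (Q₁ a - Q₂ a) =
        ((∑ a, p₁ a * Q₁ a) - (∑ a, p₂ a * Q₁ a)) + ((∑ a, p₂ a * Q₂ a) - (∑ a, p₁ a * Q₂ a)) := by
      rw [← Finset.sum_sub_distrib, ← Finset.sum_sub_distrib, ← Finset.sum_add_distrib]
      apply Finset.sum_congr rfl; intro a _; ring
    rw [he]; linarith
  have hCS : ∑ a, (p₁ a - p₂ a) * (Q₁ a - Q₂ a) ≤ Real.sqrt S * Real.sqrt T :=
    Real.sum_mul_le_sqrt_mul_sqrt _ _ _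
  have hsq : Real.sqrt S * Real.sqrt S = S := Real.mul_self_sqrt hS0
  rcases eq_or_lt_of_le (Real.sqrt_nonneg S) with h | h
  · rw [← h]; positivity
  · rw [div_mul_eq_mul_div, one_mul, le_div_iff₀ (by positivity)]
    have : τ * μ * (Real.sqrt S * Real.sqrt S) ≤ Real.sqrt S * Real.sqrt T := by
      rw [hsq]; linarith
    nlinarith [this, h]
end

section
/- Let A be a nonempty finite set, τ > 0, and Q : A → ℝ. There exists a unique z ∈ ℝ with Σ_{a∈A} max(Q(a)/τ − z, 0) = 1, and the policy π*(a) = max(Q(a)/τ − z, 0) is the unique maximizer over Δ(A) of π ↦ Σ_{a∈A} π(a)·Q(a) − (τ/2)·(Σ_{a∈A} π(a)² − 1). -/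
private lemma term_key {τ p : ℝ} (hτ : 0 < τ) (hp : 0 ≤ p) (Q z : ℝ) :
    τ / 2 * (p - max (Q / τ - z) 0) ^ 2 - τ * z * (p - max (Q / τ - z) 0) ≤
      max (Q / τ - z) 0 * Q - p * Q - τ / 2 * (max (Q / τ - z) 0) ^ 2 + τ / 2 * p ^ 2 := by
  have hQ : Q = τ * (Q / τ) := by field_simp
  rcases le_or_gt 0 (Q / τ - z) with h | h
  · rw [max_eq_left h]
    set q := Q / τ with hqd
    rw [hQ]
    ring_nf
    exact le_refl _
  · rw [max_eq_right h.le]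
    have hq : Q < τ * z := by
      have h1 : Q / τ < z := by linarith
      have := (div_lt_iff₀ hτ).mp h1
      linarith
    nlinarith [mul_nonneg hp (sub_nonneg.mpr hq.le)]

private lemma strict_dec {A : Type*} [Fintype A] {τ : ℝ} (Q : A → ℝ) {u v : ℝ}
    (huv : u < v) (hu : ∑ a, max (Q a / τ - u) 0 = 1) :
    ∑ a, max (Q a / τ - v) 0 < 1 := by
  have hex : ∃ a : A, 0 < max (Q a / τ - u) 0 := by
    by_contra hc
    push_neg at hc
    have : ∑ a, max (Q a / τ - u) 0 ≤ 0 := Finset.sum_nonpos fun a _ => hc a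
    linarith
  obtain ⟨a₀, ha₀⟩ := hex
  have ha₀' : 0 < Q a₀ / τ - u := by
    rcases lt_max_iff.mp ha₀ with h | h
    · exact h
    · exact absurd h (lt_irrefl 0)
  rw [← hu]
  apply Finset.sum_lt_sum
  · intro a _
    exact max_le_max (by linarith) le_rfl
  · refine ⟨a₀, Finset.mem_univ a₀, ?_⟩
    have : max (Q a₀ / τ - v) 0 < Q a₀ / τ - u := max_lt (by linarith) ha₀'
    calc max (Q a₀ / τ - v) 0 < Q a₀ / τ - u := this
      _ ≤ max (Q a₀ / τ - u) 0 := le_max_left _ _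

theorem stmt_9 {A : Type*} [Fintype A] [Nonempty A] (τ : ℝ) (hτ : 0 < τ) (Q : A → ℝ) :
    (∃! z : ℝ, ∑ a, max (Q a / τ - z) 0 = 1) ∧
    (∀ z : ℝ, ∑ a, max (Q a / τ - z) 0 = 1 →
      (fun a => max (Q a / τ - z) 0) ∈ probSimplex A ∧
      (∀ p ∈ probSimplex A,
        ∑ a, p a * Q a - τ / 2 * (∑ a, (p a) ^ 2 - 1) ≤
          ∑ a, max (Q a / τ - z) 0 * Q a -
            τ / 2 * (∑ a, (max (Q a / τ - z) 0) ^ 2 - 1)) ∧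
      (∀ p ∈ probSimplex A,
        (∑ a, p a * Q a - τ / 2 * (∑ a, (p a) ^ 2 - 1) =
          ∑ a, max (Q a / τ - z) 0 * Q a -
            τ / 2 * (∑ a, (max (Q a / τ - z) 0) ^ 2 - 1)) →
        p = fun a => max (Q a / τ - z) 0)) := by
  constructor
  · -- existence and uniqueness of z
    have hcont : Continuous (fun z : ℝ => ∑ a, max (Q a / τ - z) 0) := by
      apply continuous_finset_sum
      intro a _
      exact (continuous_const.sub continuous_id).max continuous_const
    have hne : (Finset.univ : Finset A).Nonempty := Finset.univ_nonempty
    set zhi : ℝ := Finset.univ.sup' hne (fun a => Q a / τ) with hzhi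
    set zlo : ℝ := Finset.univ.inf' hne (fun a => Q a / τ) - 1 with hzlo
    have hzle : zlo ≤ zhi := by
      have h1 : Finset.univ.inf' hne (fun a => Q a / τ) ≤
          Finset.univ.sup' hne (fun a => Q a / τ) := by
        obtain ⟨a⟩ := (inferInstance : Nonempty A)
        exact le_trans (Finset.inf'_le (fun a => Q a / τ) (Finset.mem_univ a))
          (Finset.le_sup' (fun a => Q a / τ) (Finset.mem_univ a))
      simp only [hzlo, hzhi]; linarith
    have hhi : (∑ a, max (Q a / τ - zhi) 0) = 0 := by
      apply Finset.sum_eq_zero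
      intro a _
      have : Q a / τ ≤ zhi := by
        rw [hzhi]; exact Finset.le_sup' (fun a => Q a / τ) (Finset.mem_univ a)
      exact max_eq_right (by linarith)
    have hlo : (1 : ℝ) ≤ ∑ a, max (Q a / τ - zlo) 0 := by
      have h1 : ∀ a ∈ (Finset.univ : Finset A), (1 : ℝ) ≤ max (Q a / τ - zlo) 0 := by
        intro a _
        have : Finset.univ.inf' hne (fun a => Q a / τ) ≤ Q a / τ :=
          Finset.inf'_le _ (Finset.mem_univ a)
        have : (1 : ℝ) ≤ Q a / τ - zlo := by simp only [hzlo]; linarith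
        exact le_trans this (le_max_left _ _)
      have h2 := Finset.card_nsmul_le_sum Finset.univ (fun a => max (Q a / τ - zlo) 0) 1 h1
      have h3 : (1 : ℝ) ≤ (Finset.univ : Finset A).card := by
        have := Fintype.card_pos (α := A)
        exact_mod_cast this
      simpa using le_trans h3 (by simpa using h2)
    have hmem : (1 : ℝ) ∈ Set.Icc ((fun z : ℝ => ∑ a, max (Q a / τ - z) 0) zhi)
        ((fun z : ℝ => ∑ a, max (Q a / τ - z) 0) zlo) := by
      constructor
      · simpa [hhi] using (zero_le_one : (0:ℝ) ≤ 1)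
      · simpa using hlo
    obtain ⟨z, _, hz1⟩ := intermediate_value_Icc' hzle hcont.continuousOn hmem
    refine ⟨z, hz1, ?_⟩
    intro y hy
    rcases lt_trichotomy y z with h | h | h
    · exact absurd hz1 (ne_of_lt (strict_dec Q h hy))
    · exact h
    · exact absurd hy (ne_of_lt (strict_dec Q h hz1))
  · -- properties of the policy
    intro z hz
    set π : A → ℝ := fun a => max (Q a / τ - z) 0 with hπ
    have hπ0 : ∀ a, 0 ≤ π a := fun a => le_max_right _ _
    have hmain : ∀ p : A → ℝ, (∀ a, 0 ≤ p a) → ∑ a, p a = 1 →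
        τ / 2 * ∑ a, (p a - π a) ^ 2 ≤
          (∑ a, π a * Q a - τ / 2 * (∑ a, (π a) ^ 2 - 1)) -
          (∑ a, p a * Q a - τ / 2 * (∑ a, (p a) ^ 2 - 1)) := by
      intro p hp0 hp1
      have key : ∑ a, (τ / 2 * (p a - π a) ^ 2 - τ * z * (p a - π a)) ≤
          ∑ a, (π a * Q a - p a * Q a - τ / 2 * (π a) ^ 2 + τ / 2 * (p a) ^ 2) :=
        Finset.sum_le_sum fun a _ => term_key hτ (hp0 a) (Q a) z
      have e1 : ∑ a, (τ / 2 * (p a - π a) ^ 2 - τ * z * (p a - π a)) =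
          τ / 2 * (∑ a, (p a - π a) ^ 2) - τ * z * ((∑ a, p a) - ∑ a, π a) := by
        rw [Finset.sum_sub_distrib, ← Finset.mul_sum, ← Finset.mul_sum,
          Finset.sum_sub_distrib]
      have e2 : ∑ a, (π a * Q a - p a * Q a - τ / 2 * (π a) ^ 2 + τ / 2 * (p a) ^ 2) =
          (∑ a, π a * Q a) - (∑ a, p a * Q a) - τ / 2 * (∑ a, (π a) ^ 2)
            + τ / 2 * (∑ a, (p a) ^ 2) := by
        rw [Finset.sum_add_distrib, Finset.sum_sub_distrib, Finset.sum_sub_distrib,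
          ← Finset.mul_sum, ← Finset.mul_sum]
      rw [e1, e2] at key
      have hπ1 : ∑ a, π a = 1 := hz
      rw [hp1, hπ1] at key
      linarith
    have hmemπ : (fun a => max (Q a / τ - z) 0) ∈ probSimplex A := ⟨hπ0, hz⟩
    refine ⟨hmemπ, ?_, ?_⟩
    · intro p hp
      obtain ⟨hp0, hp1⟩ := hp
      have h1 := hmain p hp0 hp1
      have h2 : 0 ≤ ∑ a, (p a - π a) ^ 2 :=
        Finset.sum_nonneg fun a _ => sq_nonneg _
      nlinarith
    · intro p hp heq
      obtain ⟨hp0, hp1⟩ := hp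
      have h1 := hmain p hp0 hp1
      rw [← heq] at h1
      have h2 : 0 ≤ ∑ a, (p a - π a) ^ 2 :=
        Finset.sum_nonneg fun a _ => sq_nonneg _
      have h3 : ∑ a, (p a - π a) ^ 2 = 0 := by nlinarith
      funext a
      have h4 : ∀ a ∈ (Finset.univ : Finset A), (p a - π a) ^ 2 = 0 :=
        (Finset.sum_eq_zero_iff_of_nonneg fun a _ => sq_nonneg _).mp h3 
      have h5 := h4 a (Finset.mem_univ a)
      have : p a - π a = 0 := by nlinarith [sq_nonneg (p a - π a)]
      simpa [hπ] using sub_eq_zero.mp this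
end

section
/- Let A be a nonempty finite set with |A| elements and let τ > 0. For the Tsallis regularizer Ω(π) = (1/2)·(Σ_{a∈A} π(a)² − 1), the regularized conjugate Ω*(Q) = sup_{π ∈ Δ(A)} (Σ_{a∈A} π(a)·Q(a) − τ·Ω(π)) satisfies, for every Q : A → ℝ, max_{a∈A} Q(a) ≤ Ω*(Q) ≤ max_{a∈A} Q(a) + τ·(|A| − 1)/(2·|A|). -/
theorem stmt_19 {A : Type*} [Fintype A] [Nonempty A] (τ : ℝ) (hτ : 0 < τ)
    (Q : A → ℝ) :
    Finset.univ.sup' Finset.univ_nonempty Q ≤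
      sSup ((fun p : A → ℝ =>
        ∑ a, p a * Q a - τ * (1 / 2 * (∑ a, (p a) ^ 2 - 1))) '' probSimplex A) ∧
    sSup ((fun p : A → ℝ =>
        ∑ a, p a * Q a - τ * (1 / 2 * (∑ a, (p a) ^ 2 - 1))) '' probSimplex A) ≤
      Finset.univ.sup' Finset.univ_nonempty Q +
        τ * ((Fintype.card A : ℝ) - 1) / (2 * (Fintype.card A : ℝ)) := by
  classical
  set M := Finset.univ.sup' Finset.univ_nonempty Q with hM
  set f : (A → ℝ) → ℝ := fun p =>
    ∑ a, p a * Q a - τ * (1 / 2 * (∑ a, (p a) ^ 2 - 1)) with hf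
  set n : ℝ := (Fintype.card A : ℝ) with hn
  have hn0 : 0 < n := by
    simp [hn]
    exact_mod_cast Fintype.card_pos
  -- upper bound on any element of the image
  have hub : ∀ x ∈ f '' probSimplex A, x ≤ M + τ * (n - 1) / (2 * n) := by
    rintro x ⟨p, ⟨hp0, hp1⟩, rfl⟩
    have h1 : ∑ a, p a * Q a ≤ M := by
      calc ∑ a, p a * Q a ≤ ∑ a, p a * M := by
            apply Finset.sum_le_sum
            intro a _
            exact mul_le_mul_of_nonneg_left
              (Finset.le_sup' Q (Finset.mem_univ a)) (hp0 a)
        _ = M := by rw [← Finset.sum_mul, hp1, one_mul]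
    have h2 : (1:ℝ) ≤ n * ∑ a, (p a) ^ 2 := by
      have := sq_sum_le_card_mul_sum_sq (s := Finset.univ) (f := p)
      rw [hp1] at this
      simpa [hn, Finset.card_univ] using this
    have h3 : - τ * (1 / 2 * (∑ a, (p a) ^ 2 - 1)) ≤ τ * (n - 1) / (2 * n) := by
      rw [le_div_iff₀ (by positivity)]
      nlinarith [mul_le_mul_of_nonneg_left h2 hτ.le]
    simp only [hf]
    linarith
  have hbdd : BddAbove (f '' probSimplex A) := ⟨M + τ * (n - 1) / (2 * n), hub⟩
  -- a maximizing dirac point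
  obtain ⟨a0, _, ha0⟩ := Finset.exists_mem_eq_sup' Finset.univ_nonempty Q
  have hdir : f (fun a => if a = a0 then (1:ℝ) else 0) = M := by
    have s1 : ∑ x, (if x = a0 then (1:ℝ) else 0) * Q x = Q a0 := by
      simp [ite_mul]
    have s2 : ∑ x, (if x = a0 then (1:ℝ) else 0) ^ 2 = 1 := by
      have e : ∀ a : A, (if a = a0 then (1:ℝ) else 0) ^ 2 = if a = a0 then 1 else 0 :=
        fun a => by split <;> norm_num
      simp [e]
    simp only [hf, s1, s2]
    simp [ha0, hM]
  have hmem : f (fun a => if a = a0 then (1:ℝ) else 0) ∈ f '' probSimplex A := by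
    refine ⟨_, ⟨fun a => by positivity, ?_⟩, rfl⟩
    simp
  constructor
  · calc M = f (fun a => if a = a0 then (1:ℝ) else 0) := hdir.symm
      _ ≤ _ := le_csSup hbdd hmem
  · exact csSup_le ⟨_, hmem⟩ hub
end
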